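/- Let B be an infinite primitive set of positive integers. Then Δ(ℤ) ∩ (cl(int(W)) \ int(W)) = ∅, i.e., no point of the form Δ(m), m ∈ ℤ, lies in the closure of the interior of W without lying in the interior of W. -/

import Mathlib

/-!
Everything reduces to residue classes. `Δ(n)` lies in `int W` iff some class `n + lcm(K)ℤ`, with
`K ⊆ B` finite, consists of `B`-free integers, and `Δ(m) ∈ cl(int W)` provides, for every finite
`J ⊆ B`, such an `n ≡ m (mod lcm J)`. As `m ≠ 0` has finitely many divisors, we may choose `J` with
`gcd(m, lcm J)` maximal, so that `gcd(m, lcm K) ∣ lcm J` for all `K ⊇ J`. If `Δ(m) ∉ int W`, some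
`n' ≡ m (mod lcm K)` is a multiple of some `b ∈ B`; then `gcd(b, lcm K)` divides `m`, hence `lcm J`,
hence `n`, and the Chinese remainder theorem gives a multiple of `b` in `n + lcm(K)ℤ`.
-/

open Set MeasureTheory Filter Topology

namespace BFree

/-- The ambient compact group `∏_{b ∈ B} ℤ/bℤ`. -/
abbrev Gspace (B : Set ℕ+) : Type := ∀ b : B, ZMod ((b : ℕ+) : ℕ)

/-- The diagonal embedding `Δ : ℤ → ∏_{b ∈ B} ℤ/bℤ`. -/
def delta (B : Set ℕ+) : ℤ →+ Gspace B where
  toFun n := fun b => (n : ZMod ((b : ℕ+) : ℕ))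
  map_zero' := by funext b; simp
  map_add' m n := by funext b; simp

/-- `H`, the closure of `Δ(ℤ)`, as a (closed) subgroup of `Gspace B`. -/
def Hgrp (B : Set ℕ+) : AddSubgroup (Gspace B) :=
  (delta B).range.topologicalClosure

/-- `H` as a compact topological group. -/
abbrev Hspace (B : Set ℕ+) : Type := ↥(Hgrp B)

instance (B : Set ℕ+) : CompactSpace (Hspace B) :=
  isCompact_iff_compactSpace.mp
    (IsClosed.isCompact (AddSubgroup.isClosed_topologicalClosure _))

instance (B : Set ℕ+) : BorelSpace (Hspace B) := Subtype.borelSpace _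

/-- The window `W = {h ∈ H : h_b ≠ 0 for all b ∈ B}`. -/
def window (B : Set ℕ+) : Set (Hspace B) :=
  {h | ∀ b : B, (h : Gspace B) b ≠ 0}

/-- `Δ(n)` as an element of `H`. -/
def deltaH (B : Set ℕ+) (n : ℤ) : Hspace B :=
  ⟨delta B n, (delta B).range.le_topologicalClosure ⟨n, rfl⟩⟩

/-- The set of multiples `M_B ⊆ ℤ` of a set `B` of positive integers. -/
def MultSet (B : Set ℕ+) : Set ℤ := {n | ∃ b ∈ B, ((b : ℕ) : ℤ) ∣ n}

/-- The `B`-free set `F_B = ℤ ∖ M_B`. -/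
def FreeSet (B : Set ℕ+) : Set ℤ := {n | ∀ b ∈ B, ¬ ((b : ℕ) : ℤ) ∣ n}

/-- Set of multiples of a set of natural numbers. -/
def MultSetN (C : Set ℕ) : Set ℤ := {n | ∃ c ∈ C, (c : ℤ) ∣ n}

/-- Free set of a set of natural numbers. -/
def FreeSetN (C : Set ℕ) : Set ℤ := {n | ∀ c ∈ C, ¬ (c : ℤ) ∣ n}

/-- `#(M ∩ [1, N]) / N`. -/
noncomputable def densSeq (M : Set ℤ) (N : ℕ) : ℝ :=
  (Nat.card ↥(M ∩ Set.Icc (1 : ℤ) (N : ℤ)) : ℝ) / N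

/-- Lower (asymptotic) density of a set of integers. -/
noncomputable def lowerDensity (M : Set ℤ) : ℝ := Filter.liminf (densSeq M) Filter.atTop

/-- Upper (asymptotic) density of a set of integers. -/
noncomputable def upperDensity (M : Set ℤ) : ℝ := Filter.limsup (densSeq M) Filter.atTop

/-- `B` is taut if removing any element strictly decreases the lower density
of the set of multiples. -/
def Taut (B : Set ℕ+) : Prop :=
  ∀ b ∈ B, lowerDensity (MultSet (B \ {b})) < lowerDensity (MultSet B)

/-- `B` is primitive if no element divides another. -/
def Primitive (B : Set ℕ+) : Prop :=
  ∀ b ∈ B, ∀ b' ∈ B, (b : ℕ) ∣ (b' : ℕ) → b = b'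

/-- `lcm(S)` for a finite set of positive integers. -/
def lcmS (S : Finset ℕ+) : ℕ := S.lcm fun b => (b : ℕ)

/-- `A_S = {gcd(b, lcm S) : b ∈ B}`. -/
def ASet (B : Set ℕ+) (S : Finset ℕ+) : Set ℕ :=
  {m | ∃ b ∈ B, m = Nat.gcd (b : ℕ) (lcmS S)}

/-- The cylinder set `U_S(h) ⊆ H`. -/
def cyl (B : Set ℕ+) (S : Finset ℕ+) (hS : ↑S ⊆ B) (h : Hspace B) : Set (Hspace B) :=
  {h' | ∀ b, ∀ hb : b ∈ S, (h' : Gspace B) ⟨b, hS hb⟩ = (h : Gspace B) ⟨b, hS hb⟩}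

/-- `E = ⋃_{S ⊆ B finite} F_{A_S}`. -/
def Eset (B : Set ℕ+) : Set ℤ :=
  ⋃ (S : Finset ℕ+) (_ : ↑S ⊆ B), FreeSetN (ASet B S)

/-- `A_∞`. -/
def Ainfty (B : Set ℕ+) : Set ℕ :=
  {n | ∀ S : Finset ℕ+, ↑S ⊆ B →
    ∃ S' : Finset ℕ+, S ⊆ S' ∧ ↑S' ⊆ B ∧ n ∈ ASet B S' ∧ ∀ b ∈ S', (b : ℕ) ≠ n}

/-- The indicator `η` of the `B`-free set, as a point of `{0,1}^ℤ`. -/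
noncomputable def eta (B : Set ℕ+) : ℤ → Bool :=
  fun n => @decide (n ∈ FreeSet B) (Classical.propDecidable _)

/-- The left shift on `{0,1}^ℤ`, iterated `k` times (`k ∈ ℤ`). -/
def shift (k : ℤ) (x : ℤ → Bool) : ℤ → Bool := fun n => x (n + k)

/-- The orbit closure `X_η` of `η` in `{0,1}^ℤ`. -/
noncomputable def Xeta (B : Set ℕ+) : Set (ℤ → Bool) :=
  closure {x | ∃ k : ℤ, x = shift k (eta B)}

end BFree

theorem Int.exists_dvd_sub_and_dvd_of_gcd_dvd {a b n : ℤ} (h : (Int.gcd a b : ℤ) ∣ n) :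
    ∃ y, a ∣ y - n ∧ b ∣ y := by
  obtain ⟨t, rfl⟩ := h
  refine ⟨b * Int.gcdB a b * t, ⟨-(Int.gcdA a b * t), ?_⟩, ⟨Int.gcdB a b * t, by ring⟩⟩
  rw [Int.gcd_eq_gcd_ab]
  ring

theorem Int.exists_dvd_sub_and_dvd_of_dvd_sub_of_gcd_dvd {m n n' b L L' : ℤ} (hL : L ∣ n - m)
    (hL' : L' ∣ n' - m) (hb : b ∣ n') (hg : (Int.gcd m L' : ℤ) ∣ L) :
    ∃ y, L' ∣ y - n ∧ b ∣ y := by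
  apply Int.exists_dvd_sub_and_dvd_of_gcd_dvd
  have hgm : (Int.gcd L' b : ℤ) ∣ m := by
    simpa using ((Int.gcd_dvd_right L' b).trans hb).sub ((Int.gcd_dvd_left L' b).trans hL')
  have hgL : (Int.gcd L' b : ℤ) ∣ L := (Int.dvd_coe_gcd hgm (Int.gcd_dvd_left L' b)).trans hg
  simpa using (hgL.trans hL).add hgm

theorem exists_gcd_lcm_dvd {ι : Type*} (f : ι → ℤ) {m : ℤ} (hm : m ≠ 0) :
    ∃ J : Finset ι, ∀ K, J ⊆ K → (Int.gcd m (K.lcm f) : ℤ) ∣ J.lcm f := by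
  set d : Finset ι → ℕ := fun J => Int.gcd m (J.lcm f)
  have hbdd : BddAbove (Set.range d) := ⟨m.natAbs, by
    rintro _ ⟨J, rfl⟩
    exact Nat.le_of_dvd (Int.natAbs_pos.mpr hm) (Int.gcd_dvd_natAbs_left _ _)⟩
  obtain ⟨J, hJ⟩ := Nat.sSup_mem (Set.range_nonempty d) hbdd
  refine ⟨J, fun K hJK => ?_⟩
  have hle : d K ≤ d J := hJ ▸ le_csSup hbdd ⟨K, rfl⟩
  have hdvd : d J ∣ d K := Int.gcd_dvd_gcd_of_dvd_right m (Finset.lcm_mono hJK)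
  have heq : d K = d J :=
    le_antisymm hle (Nat.le_of_dvd (Int.gcd_pos_of_ne_zero_left _ hm) hdvd)
  change (d K : ℤ) ∣ _
  rw [heq]
  exact Int.gcd_dvd_right m _

namespace BFree

section Cylinders

variable {B : Set ℕ+}

def lcmZ (J : Finset B) : ℤ := J.lcm fun b => (((b : ℕ+) : ℕ) : ℤ)

/-- The cylinder `U_J(h)` of the paper, indexed by finite subsets of the subtype `B`. -/
def cylinder (J : Finset B) (h : Hspace B) : Set (Hspace B) :=
  {h' | ∀ b ∈ J, (h' : Gspace B) b = (h : Gspace B) b}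

theorem isOpen_cylinder (J : Finset B) (h : Hspace B) : IsOpen (cylinder J h) :=
  (isOpen_set_pi J.finite_toSet fun b _ => isOpen_discrete {(h : Gspace B) b}).preimage
    continuous_subtype_val

theorem exists_cylinder_subset {U : Set (Hspace B)} {h : Hspace B} (hU : IsOpen U) (hh : h ∈ U) :
    ∃ J, cylinder J h ⊆ U := by
  obtain ⟨U', hU', rfl⟩ := isOpen_induced_iff.mp hU
  obtain ⟨J, u, hu, hJU'⟩ := isOpen_pi_iff.mp hU' _ hh
  exact ⟨J, fun h' hh' => hJU' fun b hb => hh' b hb ▸ (hu b hb).2⟩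

theorem deltaH_mem_cylinder_iff {J : Finset B} {m n : ℤ} :
    deltaH B n ∈ cylinder J (deltaH B m) ↔ lcmZ J ∣ n - m := by
  simp only [cylinder, lcmZ, Finset.lcm_dvd_iff]
  exact forall₂_congr fun b _ => (ZMod.intCast_eq_intCast_iff_dvd_sub _ _ _).trans dvd_sub_comm

theorem deltaH_mem_window_iff {n : ℤ} : deltaH B n ∈ window B ↔ n ∈ FreeSet B := by
  simp only [window, FreeSet, Subtype.forall, Set.mem_ofPred_eq]
  exact forall₂_congr fun b _ => (ZMod.intCast_zmod_eq_zero_iff_dvd _ _).not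

theorem isClosed_window (B : Set ℕ+) : IsClosed (window B) := by
  simp only [window, Set.ofPred_forall]
  exact isClosed_iInter fun b =>
    (isClosed_discrete {0}ᶜ).preimage ((continuous_apply b).comp continuous_subtype_val)

theorem denseRange_deltaH (B : Set ℕ+) : DenseRange (deltaH B) := by
  rw [DenseRange, Subtype.dense_iff, ← Set.range_comp]
  exact subset_rfl

theorem deltaH_mem_interior_window_iff {n : ℤ} :
    deltaH B n ∈ interior (window B) ↔
      ∃ K : Finset B, ∀ n', lcmZ K ∣ n' - n → n' ∈ FreeSet B := by
  constructor
  · intro hn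
    obtain ⟨K, hK⟩ := exists_cylinder_subset isOpen_interior hn
    exact ⟨K, fun n' hn' => deltaH_mem_window_iff.mp
      (interior_subset (hK (deltaH_mem_cylinder_iff.mpr hn')))⟩
  · rintro ⟨K, hK⟩
    refine interior_maximal ?_ (isOpen_cylinder K _) (fun b _ => rfl)
    refine ((denseRange_deltaH B).open_subset_closure_inter (isOpen_cylinder K _)).trans
      (closure_minimal ?_ (isClosed_window B))
    rintro _ ⟨hc, n', rfl⟩
    exact deltaH_mem_window_iff.mpr (hK n' (deltaH_mem_cylinder_iff.mp hc))

theorem exists_deltaH_mem_of_mem_closure {U : Set (Hspace B)} (hU : IsOpen U) {m : ℤ}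
    (hm : deltaH B m ∈ closure U) (J : Finset B) :
    ∃ n, lcmZ J ∣ n - m ∧ deltaH B n ∈ U := by
  have hJ := isOpen_cylinder J (deltaH B m)
  obtain ⟨n, hnJ, hnU⟩ := (denseRange_deltaH B).exists_mem_open (hJ.inter hU)
    (mem_closure_iff.mp hm _ hJ fun b _ => rfl)
  exact ⟨n, deltaH_mem_cylinder_iff.mp hnJ, hnU⟩

end Cylinders

theorem statement16_general (B : Set ℕ+) :
    Set.range (deltaH B) ∩ (closure (interior (window B)) \ interior (window B)) = ∅ := by
  refine Set.eq_empty_iff_forall_notMem.mpr ?_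
  rintro _ ⟨⟨m, rfl⟩, hcl, hint⟩
  have hfree : m ∈ FreeSet B := deltaH_mem_window_iff.mp
    (closure_minimal interior_subset (isClosed_window B) hcl)
  simp only [deltaH_mem_interior_window_iff, not_exists, not_forall, FreeSet,
    Set.mem_ofPred_eq, not_not, exists_prop] at hint
  have hm : m ≠ 0 := by
    rintro rfl
    obtain ⟨-, -, b, hb, -⟩ := hint ∅
    exact hfree b hb (dvd_zero _)
  obtain ⟨J, hJ⟩ := exists_gcd_lcm_dvd (fun b : B => (((b : ℕ+) : ℕ) : ℤ)) hm
  obtain ⟨n, hnm, hn⟩ := exists_deltaH_mem_of_mem_closure isOpen_interior hcl J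
  obtain ⟨K, hK⟩ := deltaH_mem_interior_window_iff.mp hn
  obtain ⟨n', hn'm, b, hb, hbn'⟩ := hint (K ∪ J)
  obtain ⟨y, hyn, hby⟩ := Int.exists_dvd_sub_and_dvd_of_dvd_sub_of_gcd_dvd hnm hn'm hbn'
    (hJ _ Finset.subset_union_right)
  exact hK y ((Finset.lcm_mono Finset.subset_union_left).trans hyn) b hb hby

/-- For an infinite primitive `B`: `Δ(ℤ) ∩ (cl(int W) ∖ int W) = ∅`. -/
theorem statement16 (B : Set ℕ+) (hB : B.Infinite) (hprim : Primitive B) :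
    Set.range (deltaH B) ∩ (closure (interior (window B)) \ interior (window B)) = ∅ :=
  statement16_general B

end BFree
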